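/- In the weak mixed formulation, if the pair (F, ζ) satisfies the F-equation ∫ γ·∂F/∂t + ∫ γ·(ζ v^⊥) − (1/2)∫ (v·F)(∇·γ) + G'(F; γ) = 0 for all γ in a space V_F that contains −∇^⊥η for every η ∈ V_ζ, then ζ' := the weak vorticity defined by ∫ η ζ' = −∫ ∇^⊥η · F satisfies the weak vorticity evolution equation ∫ η ∂ζ'/∂t − ∫ ∇η·(ζ v) − G'(F; ∇^⊥η) = 0 for all η ∈ V_ζ. -/

import Mathlib

/-! Test the `F`-equation with `γ = −∇^⊥η`. The divergence term vanishes because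
`∇·∇^⊥η = 0` (symmetry of the second derivative of a `C²` function), the rotation term
becomes `−∫ ∇η·(ζ v)` since `a^⊥·b^⊥ = a·b`, and the time-derivative term is
`∫ η ∂ζ'/∂t`, obtained by differentiating the weak definition of `ζ'` in time. -/

open MeasureTheory

noncomputable def pdx (f : ℝ × ℝ → ℝ) (p : ℝ × ℝ) : ℝ := fderiv ℝ f p (1, 0)

noncomputable def pdy (f : ℝ × ℝ → ℝ) (p : ℝ × ℝ) : ℝ := fderiv ℝ f p (0, 1)

/-- Dot product on `ℝ²`. -/
def dotP (a b : ℝ × ℝ) : ℝ := a.1 * b.1 + a.2 * b.2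

/-- `∇η`. -/
noncomputable def gradf (η : ℝ × ℝ → ℝ) (p : ℝ × ℝ) : ℝ × ℝ := (pdx η p, pdy η p)

/-- `∇^⊥η = (−∂_y η, ∂_x η)`. -/
noncomputable def perpGrad (η : ℝ × ℝ → ℝ) (p : ℝ × ℝ) : ℝ × ℝ := (-(pdy η p), pdx η p)

/-- `v^⊥ = (−v_y, v_x)`. -/
def perpV (a : ℝ × ℝ) : ℝ × ℝ := (-a.2, a.1)

/-- Divergence of a planar vector field. -/
noncomputable def divg (w : ℝ × ℝ → ℝ × ℝ) (p : ℝ × ℝ) : ℝ :=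
  pdx (fun q => (w q).1) p + pdy (fun q => (w q).2) p

lemma dotP_neg_left (a b : ℝ × ℝ) : dotP (-a) b = -dotP a b := by
  simp only [dotP, Prod.fst_neg, Prod.snd_neg]; ring

lemma dotP_perpV_perpV (a b : ℝ × ℝ) : dotP (perpV a) (perpV b) = dotP a b := by
  simp only [dotP, perpV]; ring

lemma perpV_smul (c : ℝ) (a : ℝ × ℝ) : perpV (c • a) = c • perpV a := by
  simp only [perpV, Prod.smul_mk, Prod.smul_fst, Prod.smul_snd, smul_eq_mul, mul_neg]

lemma perpGrad_eq_perpV_gradf (η : ℝ × ℝ → ℝ) (p : ℝ × ℝ) :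
    perpGrad η p = perpV (gradf η p) := rfl

lemma pdx_pdy_comm {η : ℝ × ℝ → ℝ} (hη : ContDiff ℝ 2 η) (p : ℝ × ℝ) :
    pdx (fun q => pdy η q) p = pdy (fun q => pdx η q) p := by
  have hd : DifferentiableAt ℝ (fderiv ℝ η) p :=
    ((hη.fderiv_right (m := 1) (by norm_num)).differentiable (by norm_num)) p
  have hsecond : ∀ a b : ℝ × ℝ,
      fderiv ℝ (fun q => fderiv ℝ η q a) p b = fderiv ℝ (fderiv ℝ η) p b a := by
    intro a b
    rw [fderiv_clm_apply hd (differentiableAt_const a)]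
    simp
  have hsymm := (hη.contDiffAt (x := p)).isSymmSndFDerivAt (by norm_num) (1, 0) (0, 1)
  simpa only [pdx, pdy, hsecond] using hsymm

lemma divg_neg (w : ℝ × ℝ → ℝ × ℝ) (p : ℝ × ℝ) :
    divg (fun q => -(w q)) p = -divg w p := by
  simp only [divg, pdx, pdy, Prod.fst_neg, Prod.snd_neg, fderiv_fun_neg,
    neg_apply]
  ring

lemma divg_perpGrad {η : ℝ × ℝ → ℝ} (hη : ContDiff ℝ 2 η) (p : ℝ × ℝ) :
    divg (perpGrad η) p = 0 := by
  have hneg : pdx (fun q => -pdy η q) p = -pdx (fun q => pdy η q) p := by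
    simp only [pdx, fderiv_fun_neg, neg_apply]
  simp only [divg, perpGrad, hneg, pdx_pdy_comm hη]
  ring

lemma integral_dotP_neg_left (μ : Measure (ℝ × ℝ)) (w u : ℝ × ℝ → ℝ × ℝ) :
    ∫ p, dotP (-(w p)) (u p) ∂μ = -∫ p, dotP (w p) (u p) ∂μ := by
  simp only [dotP_neg_left, integral_neg]

/-- In the weak mixed formulation on a closed domain: if `(F, ζ)` satisfies the
`F`-equation for all test functions `γ` in a space `V_F` containing `−∇^⊥η` for
every `η ∈ V_ζ`, then the weak vorticity `ζ'` of `F` (defined by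
`∫ η ζ' = −∫ ∇^⊥η · F`) satisfies the weak vorticity evolution equation
`∫ η ∂ζ'/∂t − ∫ ∇η·(ζ v) − G'(F; ∇^⊥η) = 0` for all `η ∈ V_ζ`. -/
theorem weak_vorticity_consistency
    (μ : Measure (ℝ × ℝ))
    (VF : Set ((ℝ × ℝ) → ℝ × ℝ)) (Vζ : Set ((ℝ × ℝ) → ℝ))
    (F Ft : ℝ → (ℝ × ℝ) → ℝ × ℝ)            -- transported field and its time derivative
    (ζ : ℝ → (ℝ × ℝ) → ℝ)                    -- prognostic vorticity
    (ζ' ζ't : ℝ → (ℝ × ℝ) → ℝ)               -- weak vorticity of F and its time derivative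
    (v : (ℝ × ℝ) → ℝ × ℝ)                    -- transporting velocity
    (G' : ((ℝ × ℝ) → ℝ × ℝ) → ((ℝ × ℝ) → ℝ × ℝ) → ℝ)
    -- G' is linear (odd) in its test-function argument:
    (hG'neg : ∀ Fa w, G' Fa (fun p => -(w p)) = -(G' Fa w))
    -- test functions are C² and −∇^⊥η belongs to V_F for η ∈ V_ζ:
    (hη : ∀ η ∈ Vζ, ContDiff ℝ 2 η)
    (hmem : ∀ η ∈ Vζ, (fun p => -(perpGrad η p)) ∈ VF)
    -- weak definition of the vorticity ζ' of F, at every time: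
    (hweak : ∀ t, ∀ η ∈ Vζ,
      ∫ p, η p * ζ' t p ∂μ = -∫ p, dotP (perpGrad η p) (F t p) ∂μ)
    -- differentiation under the integral sign (Ft, ζ't are the weak time derivatives):
    (hdζ' : ∀ η ∈ Vζ, ∀ t, HasDerivAt (fun s => ∫ p, η p * ζ' s p ∂μ)
      (∫ p, η p * ζ't t p ∂μ) t)
    (hdF : ∀ η ∈ Vζ, ∀ t, HasDerivAt (fun s => ∫ p, dotP (perpGrad η p) (F s p) ∂μ)
      (∫ p, dotP (perpGrad η p) (Ft t p) ∂μ) t)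
    -- the weak F-equation, for all test functions γ ∈ V_F:
    (hFeq : ∀ t, ∀ γ ∈ VF,
      (∫ p, dotP (γ p) (Ft t p) ∂μ)
        + (∫ p, dotP (γ p) (ζ t p • perpV (v p)) ∂μ)
        - (1/2) * (∫ p, dotP (v p) (F t p) * divg γ p ∂μ)
        + G' (F t) γ = 0) :
    ∀ t, ∀ η ∈ Vζ,
      (∫ p, η p * ζ't t p ∂μ)
        - (∫ p, dotP (gradf η p) (ζ t p • v p) ∂μ)
        - G' (F t) (fun p => perpGrad η p) = 0 := by
  intro t η hηV
  have hvort_deriv : ∫ p, η p * ζ't t p ∂μ = -∫ p, dotP (perpGrad η p) (Ft t p) ∂μ := by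
    refine (hdζ' η hηV t).unique ?_
    simpa only [hweak _ η hηV] using (hdF η hηV t).fun_neg
  have hadvect : ∫ p, dotP (-(perpGrad η p)) (ζ t p • perpV (v p)) ∂μ
      = -∫ p, dotP (gradf η p) (ζ t p • v p) ∂μ := by
    simp only [integral_dotP_neg_left, perpGrad_eq_perpV_gradf, ← perpV_smul,
      dotP_perpV_perpV]
  have hFeq_η := hFeq t _ (hmem η hηV)
  simp only [divg_neg, divg_perpGrad (hη η hηV), neg_zero, mul_zero, integral_zero,
    integral_dotP_neg_left, hadvect, hG'neg] at hFeq_η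
  linarith
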